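/- arXiv:1909.01084 — 4 statements merged into one kernel-verified Lean document; each statement's English description precedes it below -/
import Mathlib

section
/- Let V be a finite nonempty type and let p, q : V → ℝ be probability mass functions (p v ≥ 0, q v ≥ 0 for all v, and Σ_v p v = Σ_v q v = 1) with p v + q v > 0 for every v. For any discriminator D : V → ℝ with 0 < D v < 1 for all v, define U(D) = Σ_v (p v · log(D v) + q v · log(1 − D v)), where the convention 0 · log x = 0 is used. Then the discriminator D* given by D* v = p v / (p v + q v) satisfies U(D) ≤ U(D*) for every such D. -/
/-! The objective splits into one term per point `v`, and each term is maximised separately: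
by `log t ≤ t - 1`, `a log y ≤ a log (a / s) + (s y - a)`, and adding this for `y = D v` and
`y = 1 - D v` with `s = p v + q v` makes the linear error terms cancel. -/

open Real

lemma mul_log_le_mul_log_div_add {a s y : ℝ} (ha : 0 ≤ a) (hs : 0 < s) (hy : 0 < y) :
    a * log y ≤ a * log (a / s) + (s * y - a) := by
  rcases ha.eq_or_lt with rfl | ha
  · simpa using (mul_pos hs hy).le
  have hlog : log y - log (a / s) = log (s * y / a) := by
    rw [← log_div hy.ne' (by positivity)]
    congr 1
    field_simp
  calc a * log y = a * log (a / s) + a * log (s * y / a) := by rw [← hlog]; ring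
    _ ≤ a * log (a / s) + a * (s * y / a - 1) := by
      gcongr
      exact log_le_sub_one_of_pos (by positivity)
    _ = a * log (a / s) + (s * y - a) := by field_simp

lemma mul_log_add_mul_log_one_sub_le {a b x : ℝ} (ha : 0 ≤ a) (hb : 0 ≤ b) (hab : 0 < a + b)
    (hx₀ : 0 < x) (hx₁ : x < 1) :
    a * log x + b * log (1 - x) ≤ a * log (a / (a + b)) + b * log (1 - a / (a + b)) := by
  have hx := mul_log_le_mul_log_div_add ha hab hx₀
  have hx' := mul_log_le_mul_log_div_add hb hab (sub_pos.2 hx₁)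
  have hcompl : 1 - a / (a + b) = b / (a + b) := by field_simp; ring
  rw [hcompl]
  linear_combination hx + hx'

open Finset in
theorem megan_optimal_discriminator_general {V : Type*} [Fintype V]
    (p q : V → ℝ) (hp : ∀ v, 0 ≤ p v) (hq : ∀ v, 0 ≤ q v)
    (hpq : ∀ v, 0 < p v + q v)
    (D : V → ℝ) (hD : ∀ v, 0 < D v ∧ D v < 1) :
    ∑ v, (p v * Real.log (D v) + q v * Real.log (1 - D v)) ≤
      ∑ v, (p v * Real.log (p v / (p v + q v)) +
        q v * Real.log (1 - p v / (p v + q v))) :=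
  sum_le_sum fun v _ => mul_log_add_mul_log_one_sub_le (hp v) (hq v) (hpq v) (hD v).1 (hD v).2

open Finset in
/-- The discriminator `D* v = p v / (p v + q v)` maximizes
`U(D) = ∑ v, (p v · log (D v) + q v · log (1 − D v))` over discriminators with values
strictly between 0 and 1. -/
theorem megan_optimal_discriminator {V : Type*} [Fintype V] [Nonempty V]
    (p q : V → ℝ) (hp : ∀ v, 0 ≤ p v) (hq : ∀ v, 0 ≤ q v)
    (hps : ∑ v, p v = 1) (hqs : ∑ v, q v = 1)
    (hpq : ∀ v, 0 < p v + q v)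
    (D : V → ℝ) (hD : ∀ v, 0 < D v ∧ D v < 1) :
    ∑ v, (p v * Real.log (D v) + q v * Real.log (1 - D v)) ≤
      ∑ v, (p v * Real.log (p v / (p v + q v)) +
        q v * Real.log (1 - p v / (p v + q v))) :=
  megan_optimal_discriminator_general p q hp hq hpq D hD
end

section
/- Let V be a finite nonempty type and let p, q : V → ℝ be probability mass functions (p v ≥ 0, q v ≥ 0 for all v, and Σ_v p v = Σ_v q v = 1) with p v + q v > 0 for every v. Define, with the convention 0 · log x = 0, C(q) = Σ_v (p v · log(p v / (p v + q v)) + q v · log(q v / (p v + q v))). Then C(q) ≥ −log 4, and C(q) = −log 4 if and only if q = p. -/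
/-!
With `m = (p + q) / 2`, each summand of `C(q) + log 4` equals
`p log (p / m) + q log (q / m)`, and by Gibbs' inequality `a log (a / b) ≥ a - b`
(the nonnegativity of `b · klFun (a / b)`) this is at least `(p - m) + (q - m) = 0`,
with equality exactly when `p = m = q`.
-/

open Finset Real InformationTheory

section Pointwise

variable {a b : ℝ}

lemma mul_log_div_add_sub_eq_mul_klFun (a : ℝ) (hb : b ≠ 0) :
    a * log (a / b) + b - a = b * klFun (a / b) := by
  rw [klFun_apply, mul_sub, mul_add, ← mul_assoc, mul_div_cancel₀ a hb]
  ring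

lemma sub_le_mul_log_div (ha : 0 ≤ a) (hb : 0 < b) : a - b ≤ a * log (a / b) := by
  have := mul_log_div_add_sub_eq_mul_klFun a hb.ne'
  nlinarith [klFun_nonneg (div_nonneg ha hb.le)]

lemma mul_log_div_eq_sub_iff (ha : 0 ≤ a) (hb : 0 < b) :
    a * log (a / b) = a - b ↔ a = b := by
  rw [← sub_eq_zero, show a * log (a / b) - (a - b) = a * log (a / b) + b - a by ring,
    mul_log_div_add_sub_eq_mul_klFun a hb.ne', mul_eq_zero_iff_left hb.ne',
    klFun_eq_zero_iff (div_nonneg ha hb.le), div_eq_one_iff_eq hb.ne']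

lemma mul_log_div_add_mul_log_two (a : ℝ) {c : ℝ} (hc : c ≠ 0) :
    a * log (a / c) + a * log 2 = a * log (a / (c / 2)) := by
  rcases eq_or_ne a 0 with rfl | ha
  · simp
  · rw [div_div_eq_mul_div, mul_div_right_comm, log_mul (div_ne_zero ha hc) two_ne_zero]
    ring

lemma add_mul_log_two_eq_gibbs_gaps (hab : a + b ≠ 0) :
    a * log (a / (a + b)) + b * log (b / (a + b)) + (a + b) * log 2 =
      (a * log (a / ((a + b) / 2)) - (a - (a + b) / 2)) +
        (b * log (b / ((a + b) / 2)) - (b - (a + b) / 2)) := by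
  rw [← mul_log_div_add_mul_log_two a hab, ← mul_log_div_add_mul_log_two b hab]
  ring

lemma neg_mul_log_two_le (ha : 0 ≤ a) (hb : 0 ≤ b) (hab : 0 < a + b) :
    -((a + b) * log 2) ≤ a * log (a / (a + b)) + b * log (b / (a + b)) := by
  have hm : 0 < (a + b) / 2 := half_pos hab
  have := add_mul_log_two_eq_gibbs_gaps hab.ne'
  linarith [sub_le_mul_log_div ha hm, sub_le_mul_log_div hb hm]

lemma eq_neg_mul_log_two_iff (ha : 0 ≤ a) (hb : 0 ≤ b) (hab : 0 < a + b) :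
    a * log (a / (a + b)) + b * log (b / (a + b)) = -((a + b) * log 2) ↔ a = b := by
  have hm : 0 < (a + b) / 2 := half_pos hab
  rw [← add_eq_zero_iff_eq_neg, add_mul_log_two_eq_gibbs_gaps hab.ne',
    add_eq_zero_iff_of_nonneg (sub_nonneg.2 (sub_le_mul_log_div ha hm))
      (sub_nonneg.2 (sub_le_mul_log_div hb hm)),
    sub_eq_zero, sub_eq_zero, mul_log_div_eq_sub_iff ha hm, mul_log_div_eq_sub_iff hb hm]
  constructor
  · rintro ⟨h, -⟩
    linarith
  · rintro rfl
    constructor <;> ring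

end Pointwise

theorem megan_global_optimum_general {V : Type*} [Fintype V]
    (p q : V → ℝ) (hp : ∀ v, 0 ≤ p v) (hq : ∀ v, 0 ≤ q v)
    (hps : ∑ v, p v = 1) (hqs : ∑ v, q v = 1)
    (hpq : ∀ v, 0 < p v + q v) :
    -Real.log 4 ≤
      ∑ v, (p v * Real.log (p v / (p v + q v)) + q v * Real.log (q v / (p v + q v))) ∧
    (∑ v, (p v * Real.log (p v / (p v + q v)) + q v * Real.log (q v / (p v + q v))) =
        -Real.log 4 ↔ q = p) := by
  have hlog4 : -log 4 = ∑ v, -((p v + q v) * log 2) := by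
    rw [sum_neg_distrib, ← sum_mul, sum_add_distrib, hps, hqs,
      show (4 : ℝ) = 2 ^ 2 by norm_num, log_pow]
    push_cast
    ring
  have hle : ∀ v ∈ univ, -((p v + q v) * log 2) ≤
      p v * log (p v / (p v + q v)) + q v * log (q v / (p v + q v)) :=
    fun v _ ↦ neg_mul_log_two_le (hp v) (hq v) (hpq v)
  refine ⟨hlog4 ▸ sum_le_sum hle, ?_⟩
  rw [hlog4, eq_comm, sum_eq_sum_iff_of_le hle, funext_iff]
  simp only [mem_univ, true_implies, eq_comm (a := q _)]
  exact forall_congr' fun v ↦ eq_comm.trans (eq_neg_mul_log_two_iff (hp v) (hq v) (hpq v))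

open Finset in
/-- The value of the objective at the optimal discriminator,
`C(q) = ∑ v, (p v · log (p v/(p v+q v)) + q v · log (q v/(p v+q v)))`,
satisfies `C(q) ≥ −log 4` with equality iff `q = p`. -/
theorem megan_global_optimum {V : Type*} [Fintype V] [Nonempty V]
    (p q : V → ℝ) (hp : ∀ v, 0 ≤ p v) (hq : ∀ v, 0 ≤ q v)
    (hps : ∑ v, p v = 1) (hqs : ∑ v, q v = 1)
    (hpq : ∀ v, 0 < p v + q v) :
    -Real.log 4 ≤
      ∑ v, (p v * Real.log (p v / (p v + q v)) + q v * Real.log (q v / (p v + q v))) ∧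
    (∑ v, (p v * Real.log (p v / (p v + q v)) + q v * Real.log (q v / (p v + q v))) =
        -Real.log 4 ↔ q = p) :=
  megan_global_optimum_general p q hp hq hps hqs hpq
end

section
/- Let V be a finite nonempty type and let p, q : V → ℝ be probability mass functions (p v ≥ 0, q v ≥ 0 for all v, and Σ_v p v = Σ_v q v = 1) with p v + q v > 0 for every v. Then, with the convention 0 · log x = 0, the supremum over all D : V → ℝ with 0 < D v < 1 for all v of Σ_v (p v · log(D v) + q v · log(1 − D v)) equals Σ_v (p v · log(p v / (p v + q v)) + q v · log(q v / (p v + q v))). -/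
/-!
Pointwise in `v`, the tangent-line bound `log x ≤ x - 1` shows that `d ↦ a log d + b log (1 - d)`
never exceeds its value at `d = a / (a + b)`, so the optimal value is an upper bound. It is the
supremum because the admissible discriminators `(p + ε) / (p + q + 2ε)` converge to `D*` as
`ε → 0⁺`, and `a log x` is continuous in the limit wherever `a ≠ 0` (then `D* ≠ 0`).
-/

open Filter Topology Real

namespace Real

theorem mul_log_le_mul_log_div_add_sub {a d s : ℝ} (ha : 0 ≤ a) (hd : 0 < d) (hs : 0 < s) :
    a * log d ≤ a * log (a / s) + (d * s - a) := by
  rcases ha.eq_or_lt with rfl | ha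
  · simpa using (mul_pos hd hs).le
  have hlog : log d - log (a / s) = log (d * s / a) := by
    rw [log_div (by positivity) ha.ne', log_div ha.ne' hs.ne', log_mul hd.ne' hs.ne']
    ring
  have htangent : a * log (d * s / a) ≤ d * s - a := by
    calc a * log (d * s / a) ≤ a * (d * s / a - 1) :=
          mul_le_mul_of_nonneg_left (log_le_sub_one_of_pos (by positivity)) ha.le
      _ = d * s - a := by field_simp
  rw [← hlog, mul_sub] at htangent
  linarith

theorem mul_log_add_mul_log_one_sub_le {a b d : ℝ} (ha : 0 ≤ a) (hb : 0 ≤ b) (hab : 0 < a + b)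
    (hd₀ : 0 < d) (hd₁ : d < 1) :
    a * log d + b * log (1 - d) ≤ a * log (a / (a + b)) + b * log (b / (a + b)) := by
  have hp := mul_log_le_mul_log_div_add_sub ha hd₀ hab
  have hq := mul_log_le_mul_log_div_add_sub hb (sub_pos.2 hd₁) hab
  linarith

theorem tendsto_const_mul_log {α : Type*} {l : Filter α} {f : α → ℝ} {a x : ℝ}
    (hx : a ≠ 0 → x ≠ 0) (hf : Tendsto f l (𝓝 x)) :
    Tendsto (fun t ↦ a * log (f t)) l (𝓝 (a * log x)) := by
  by_cases ha : a = 0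
  · simpa [ha] using tendsto_const_nhds
  · exact ((continuousAt_log (hx ha)).tendsto.comp hf).const_mul a

theorem tendsto_mul_log_add_div_add_two_mul (a : ℝ) {s : ℝ} (hs : 0 < s) :
    Tendsto (fun ε ↦ a * log ((a + ε) / (s + 2 * ε))) (𝓝 0) (𝓝 (a * log (a / s))) := by
  have hquot : ContinuousAt (fun ε : ℝ ↦ (a + ε) / (s + 2 * ε)) 0 := by
    fun_prop (disch := simpa using hs.ne')
  exact tendsto_const_mul_log (fun ha ↦ div_ne_zero ha hs.ne') (by simpa using hquot.tendsto)

end Real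

open Finset in
theorem megan_sup_discriminator_value_general {V : Type*} [Fintype V]
    (p q : V → ℝ) (hp : ∀ v, 0 ≤ p v) (hq : ∀ v, 0 ≤ q v)
    (hpq : ∀ v, 0 < p v + q v) :
    sSup {x : ℝ | ∃ D : V → ℝ,
        (∀ v, 0 < D v ∧ D v < 1) ∧
        x = ∑ v, (p v * Real.log (D v) + q v * Real.log (1 - D v))} =
      ∑ v, (p v * Real.log (p v / (p v + q v)) + q v * Real.log (q v / (p v + q v))) := by
  set S := {x : ℝ | ∃ D : V → ℝ, (∀ v, 0 < D v ∧ D v < 1) ∧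
    x = ∑ v, (p v * Real.log (D v) + q v * Real.log (1 - D v))}
  set T := ∑ v, (p v * log (p v / (p v + q v)) + q v * log (q v / (p v + q v)))
  have hub : ∀ x ∈ S, x ≤ T := by
    rintro x ⟨D, hD, rfl⟩
    exact sum_le_sum fun v _ ↦
      mul_log_add_mul_log_one_sub_le (hp v) (hq v) (hpq v) (hD v).1 (hD v).2
  set F : ℝ → ℝ := fun ε ↦ ∑ v, (p v * log ((p v + ε) / (p v + q v + 2 * ε)) +
    q v * log ((q v + ε) / (p v + q v + 2 * ε)))
  have hmem : ∀ᶠ ε in 𝓝[>] 0, F ε ∈ S := by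
    filter_upwards [self_mem_nhdsWithin] with ε (hε : 0 < ε)
    have hden : ∀ v, 0 < p v + q v + 2 * ε := fun v ↦ by linarith [hpq v]
    refine ⟨fun v ↦ (p v + ε) / (p v + q v + 2 * ε), fun v ↦ ⟨?_, ?_⟩, sum_congr rfl fun v _ ↦ ?_⟩
    · exact div_pos (by linarith [hp v]) (hden v)
    · rw [div_lt_one (hden v)]; linarith [hq v]
    · rw [one_sub_div (hden v).ne', show p v + q v + 2 * ε - (p v + ε) = q v + ε by ring]
  have hlim : Tendsto F (𝓝[>] 0) (𝓝 T) :=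
    tendsto_nhdsWithin_of_tendsto_nhds <| tendsto_finsetSum _ fun v _ ↦
      (tendsto_mul_log_add_div_add_two_mul (p v) (hpq v)).add
        (tendsto_mul_log_add_div_add_two_mul (q v) (hpq v))
  exact (isLUB_of_mem_closure hub (mem_closure_of_tendsto hlim hmem)).csSup_eq
    ⟨_, hmem.exists.choose_spec⟩

open Finset in
/-- The supremum over discriminators `D : V → (0,1)` of
`∑ v, (p v · log (D v) + q v · log (1 − D v))` equals the value at the optimal
discriminator `D* v = p v / (p v + q v)`. -/
theorem megan_sup_discriminator_value {V : Type*} [Fintype V] [Nonempty V]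
    (p q : V → ℝ) (hp : ∀ v, 0 ≤ p v) (hq : ∀ v, 0 ≤ q v)
    (hps : ∑ v, p v = 1) (hqs : ∑ v, q v = 1)
    (hpq : ∀ v, 0 < p v + q v) :
    sSup {x : ℝ | ∃ D : V → ℝ,
        (∀ v, 0 < D v ∧ D v < 1) ∧
        x = ∑ v, (p v * Real.log (D v) + q v * Real.log (1 - D v))} =
      ∑ v, (p v * Real.log (p v / (p v + q v)) + q v * Real.log (q v / (p v + q v))) :=
  megan_sup_discriminator_value_general p q hp hq hpq
end

section
/- Let V be a finite nonempty type and let p : V → ℝ be a probability mass function (p v ≥ 0 for all v and Σ_v p v = 1) with p v > 0 for every v. Define, for probability mass functions q : V → ℝ with q v ≥ 0 and Σ_v q v = 1, the quantity F(q) = sup over all D : V → ℝ with 0 < D v < 1 of Σ_v (p v · log(D v) + q v · log(1 − D v)) (with the convention 0 · log x = 0). Then the infimum of F over all such q equals −log 4, and it is attained exactly at q = p. -/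
open Finset

private lemma pointA {a b d : ℝ} (ha : 0 < a) (hb : 0 ≤ b) (hd0 : 0 < d) (hd1 : d < 1) :
    a * Real.log d + b * Real.log (1 - d) ≤
      a * Real.log (a / (a + b)) + b * Real.log (b / (a + b)) := by
  rcases hb.eq_or_lt with h | hb'
  · obtain rfl : b = 0 := h.symm
    have h0 : Real.log d ≤ 0 := Real.log_nonpos hd0.le hd1.le
    simp [div_self ha.ne']
    nlinarith
  · have hab : 0 < a + b := by linarith
    have h1d : 0 < 1 - d := by linarith
    have k1 : Real.log (d * (a + b) / a) ≤ d * (a + b) / a - 1 :=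
      Real.log_le_sub_one_of_pos (by positivity)
    have k2 : Real.log ((1 - d) * (a + b) / b) ≤ (1 - d) * (a + b) / b - 1 :=
      Real.log_le_sub_one_of_pos (by positivity)
    have e1 : Real.log (d * (a + b) / a) = Real.log d - Real.log (a / (a + b)) := by
      rw [Real.log_div (by positivity) ha.ne', Real.log_mul hd0.ne' hab.ne',
        Real.log_div ha.ne' hab.ne']; ring
    have e2 : Real.log ((1 - d) * (a + b) / b) = Real.log (1 - d) - Real.log (b / (a + b)) := by
      rw [Real.log_div (by positivity) hb'.ne', Real.log_mul h1d.ne' hab.ne',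
        Real.log_div hb'.ne' hab.ne']; ring
    rw [e1] at k1; rw [e2] at k2
    have f1 : a * (Real.log d - Real.log (a / (a + b))) ≤ d * (a + b) - a := by
      have := mul_le_mul_of_nonneg_left k1 ha.le
      have e : a * (d * (a + b) / a - 1) = d * (a + b) - a := by field_simp
      linarith [e ▸ this]
    have f2 : b * (Real.log (1 - d) - Real.log (b / (a + b))) ≤ (1 - d) * (a + b) - b := by
      have := mul_le_mul_of_nonneg_left k2 hb'.le
      have e : b * ((1 - d) * (a + b) / b - 1) = (1 - d) * (a + b) - b := by field_simp
      linarith [e ▸ this]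
    nlinarith [f1, f2]

private lemma pointB_le {a b : ℝ} (ha : 0 < a) (hb : 0 ≤ b) :
    -((a + b) * Real.log 2) ≤ a * Real.log (a / (a + b)) + b * Real.log (b / (a + b)) := by
  rcases hb.eq_or_lt with h | hb'
  · obtain rfl : b = 0 := h.symm
    have h2 : (0:ℝ) < Real.log 2 := Real.log_pos (by norm_num)
    simp [div_self ha.ne']
    nlinarith
  · have hab : 0 < a + b := by linarith
    have k1 : Real.log ((a + b) / (2 * a)) ≤ (a + b) / (2 * a) - 1 :=
      Real.log_le_sub_one_of_pos (by positivity)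
    have k2 : Real.log ((a + b) / (2 * b)) ≤ (a + b) / (2 * b) - 1 :=
      Real.log_le_sub_one_of_pos (by positivity)
    have e1 : Real.log ((a + b) / (2 * a)) = -(Real.log (a / (a + b)) + Real.log 2) := by
      rw [Real.log_div hab.ne' (by positivity), Real.log_mul two_ne_zero ha.ne',
        Real.log_div ha.ne' hab.ne']; ring
    have e2 : Real.log ((a + b) / (2 * b)) = -(Real.log (b / (a + b)) + Real.log 2) := by
      rw [Real.log_div hab.ne' (by positivity), Real.log_mul two_ne_zero hb'.ne',
        Real.log_div hb'.ne' hab.ne']; ring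
    rw [e1] at k1; rw [e2] at k2
    have f1 : a * -(Real.log (a / (a + b)) + Real.log 2) ≤ (a + b) / 2 - a := by
      have := mul_le_mul_of_nonneg_left k1 ha.le
      have e : a * ((a + b) / (2 * a) - 1) = (a + b) / 2 - a := by field_simp
      linarith [e ▸ this]
    have f2 : b * -(Real.log (b / (a + b)) + Real.log 2) ≤ (a + b) / 2 - b := by
      have := mul_le_mul_of_nonneg_left k2 hb'.le
      have e : b * ((a + b) / (2 * b) - 1) = (a + b) / 2 - b := by field_simp
      linarith [e ▸ this]
    nlinarith [f1, f2]

private lemma pointB_lt {a b : ℝ} (ha : 0 < a) (hb : 0 ≤ b) (hne : a ≠ b) :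
    -((a + b) * Real.log 2) < a * Real.log (a / (a + b)) + b * Real.log (b / (a + b)) := by
  rcases hb.eq_or_lt with h | hb'
  · obtain rfl : b = 0 := h.symm
    have h2 : (0:ℝ) < Real.log 2 := Real.log_pos (by norm_num)
    simp [div_self ha.ne']
    nlinarith
  · have hab : 0 < a + b := by linarith
    have hne1 : (a + b) / (2 * a) ≠ 1 := by
      intro h
      have : a + b = 2 * a := by field_simp at h; linarith
      exact hne (by linarith)
    have k1 : Real.log ((a + b) / (2 * a)) < (a + b) / (2 * a) - 1 :=
      Real.log_lt_sub_one_of_pos (by positivity) hne1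
    have k2 : Real.log ((a + b) / (2 * b)) ≤ (a + b) / (2 * b) - 1 :=
      Real.log_le_sub_one_of_pos (by positivity)
    have e1 : Real.log ((a + b) / (2 * a)) = -(Real.log (a / (a + b)) + Real.log 2) := by
      rw [Real.log_div hab.ne' (by positivity), Real.log_mul two_ne_zero ha.ne',
        Real.log_div ha.ne' hab.ne']; ring
    have e2 : Real.log ((a + b) / (2 * b)) = -(Real.log (b / (a + b)) + Real.log 2) := by
      rw [Real.log_div hab.ne' (by positivity), Real.log_mul two_ne_zero hb'.ne',
        Real.log_div hb'.ne' hab.ne']; ring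
    rw [e1] at k1; rw [e2] at k2
    have f1 : a * -(Real.log (a / (a + b)) + Real.log 2) < (a + b) / 2 - a := by
      have := mul_lt_mul_of_pos_left k1 ha
      have e : a * ((a + b) / (2 * a) - 1) = (a + b) / 2 - a := by field_simp
      linarith [e ▸ this]
    have f2 : b * -(Real.log (b / (a + b)) + Real.log 2) ≤ (a + b) / 2 - b := by
      have := mul_le_mul_of_nonneg_left k2 hb'.le
      have e : b * ((a + b) / (2 * b) - 1) = (a + b) / 2 - b := by field_simp
      linarith [e ▸ this]
    nlinarith [f1, f2]

open Finset in
/-- Discrete-space version of Proposition 1: the minimax value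
`inf_q sup_D ∑ v, (p v · log (D v) + q v · log (1 − D v))` over generator
distributions `q` equals `−log 4`, and it is attained exactly at `q = p`. -/
theorem megan_minimax_value {V : Type*} [Fintype V] [Nonempty V]
    (p : V → ℝ) (hp : ∀ v, 0 < p v) (hps : ∑ v, p v = 1)
    (F : (V → ℝ) → ℝ)
    (hF : ∀ q : V → ℝ, F q = sSup {x : ℝ | ∃ D : V → ℝ,
      (∀ v, 0 < D v ∧ D v < 1) ∧
      x = ∑ v, (p v * Real.log (D v) + q v * Real.log (1 - D v))}) :
    sInf {y : ℝ | ∃ q : V → ℝ, (∀ v, 0 ≤ q v) ∧ (∑ v, q v = 1) ∧ y = F q} =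
        -Real.log 4 ∧
    (∀ q : V → ℝ, (∀ v, 0 ≤ q v) → (∑ v, q v = 1) →
      (F q = -Real.log 4 ↔ q = p)) := by
  have hlog2 : (0:ℝ) < Real.log 2 := Real.log_pos (by norm_num)
  have hlog4 : Real.log 4 = 2 * Real.log 2 := by
    rw [show (4:ℝ) = 2^2 by norm_num, Real.log_pow]; push_cast; ring
  set S : (V → ℝ) → Set ℝ := fun q => {x : ℝ | ∃ D : V → ℝ,
      (∀ v, 0 < D v ∧ D v < 1) ∧
      x = ∑ v, (p v * Real.log (D v) + q v * Real.log (1 - D v))} with hS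
  set G : (V → ℝ) → ℝ := fun q =>
    ∑ v, (p v * Real.log (p v / (p v + q v)) + q v * Real.log (q v / (p v + q v))) with hG
  -- the constant discriminator 1/2 gives value -log 4
  have hhalf : ∀ q : V → ℝ, (∑ v, q v = 1) → (-Real.log 4) ∈ S q := by
    intro q hqs
    refine ⟨fun _ => 1/2, fun v => ⟨by norm_num, by norm_num⟩, ?_⟩
    have h2 : (1:ℝ) - 1/2 = 1/2 := by norm_num
    have hl : Real.log ((1:ℝ)/2) = -Real.log 2 := by rw [one_div, Real.log_inv]
    simp only [h2, hl]
    have : ∑ v, (p v * -Real.log 2 + q v * -Real.log 2)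
        = (∑ v, p v) * -Real.log 2 + (∑ v, q v) * -Real.log 2 := by
      rw [Finset.sum_add_distrib, ← Finset.sum_mul, ← Finset.sum_mul]
    rw [this, hps, hqs, hlog4]; ring
  -- upper bound on all elements of S q
  have hub : ∀ q : V → ℝ, (∀ v, 0 ≤ q v) → ∀ x ∈ S q, x ≤ G q := by
    rintro q hq0 x ⟨D, hD, rfl⟩
    exact Finset.sum_le_sum fun v _ =>
      pointA (hp v) (hq0 v) (hD v).1 (hD v).2
  have hbdd : ∀ q : V → ℝ, (∀ v, 0 ≤ q v) → BddAbove (S q) := fun q hq0 =>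
    ⟨G q, fun x hx => hub q hq0 x hx⟩
  -- F q ≥ -log 4
  have hFge : ∀ q : V → ℝ, (∀ v, 0 ≤ q v) → (∑ v, q v = 1) → -Real.log 4 ≤ F q := by
    intro q hq0 hqs
    rw [hF]
    exact le_csSup (hbdd q hq0) (hhalf q hqs)
  -- G p = -log 4
  have hGp : G p = -Real.log 4 := by
    have : ∀ v, p v * Real.log (p v / (p v + p v)) + p v * Real.log (p v / (p v + p v))
        = p v * -Real.log 2 + p v * -Real.log 2 := by
      intro v
      have : p v / (p v + p v) = 1/2 := by
        rw [show p v + p v = 2 * p v by ring]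
        rw [div_eq_div_iff (by linarith [hp v]) (by norm_num)]; ring
      rw [this, one_div, Real.log_inv]
    rw [hG]
    simp only []
    rw [Finset.sum_congr rfl fun v _ => this v]
    have : ∑ v, (p v * -Real.log 2 + p v * -Real.log 2)
        = (∑ v, p v) * -Real.log 2 + (∑ v, p v) * -Real.log 2 := by
      rw [Finset.sum_add_distrib, ← Finset.sum_mul]
    rw [this, hps, hlog4]; ring
  -- F p = -log 4
  have hFp : F p = -Real.log 4 := by
    refine le_antisymm ?_ (hFge p (fun v => (hp v).le) hps)
    rw [hF]
    refine csSup_le ⟨_, hhalf p hps⟩ fun x hx => ?_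
    exact (hub p (fun v => (hp v).le) x hx).trans hGp.le
  -- if q ≠ p then G q > -log 4
  have hGgt : ∀ q : V → ℝ, (∀ v, 0 ≤ q v) → (∑ v, q v = 1) → q ≠ p →
      -Real.log 4 < G q := by
    intro q hq0 hqs hne
    obtain ⟨v₀, hv₀⟩ : ∃ v, q v ≠ p v := by
      by_contra h
      push_neg at h
      exact hne (funext h)
    have key : ∑ v, -((p v + q v) * Real.log 2) < G q := by
      refine Finset.sum_lt_sum (fun v _ => pointB_le (hp v) (hq0 v))
        ⟨v₀, Finset.mem_univ _, pointB_lt (hp v₀) (hq0 v₀) (Ne.symm hv₀)⟩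
    have hs : ∑ v, -((p v + q v) * Real.log 2) = -Real.log 4 := by
      have h1 : ∑ v, ((p v + q v) * Real.log 2) = Real.log 4 := by
        rw [← Finset.sum_mul, Finset.sum_add_distrib, hps, hqs, hlog4]; ring
      calc ∑ v, -((p v + q v) * Real.log 2)
          = -∑ v, ((p v + q v) * Real.log 2) := by rw [Finset.sum_neg_distrib]
        _ = -Real.log 4 := by rw [h1]
    rw [hs] at key; exact key
  -- if q ≠ p then F q > -log 4 (via a near-optimal discriminator)
  have hFgt : ∀ q : V → ℝ, (∀ v, 0 ≤ q v) → (∑ v, q v = 1) → q ≠ p →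
      -Real.log 4 < F q := by
    intro q hq0 hqs hne
    set ε : ℝ := G q + Real.log 4 with hε
    have hεpos : 0 < ε := by have := hGgt q hq0 hqs hne; simp [hε]; linarith
    set t : ℝ := Real.exp (-(ε/2)) with ht
    have ht0 : 0 < t := Real.exp_pos _
    have ht1 : t < 1 := by rw [ht]; exact Real.exp_lt_one_iff.mpr (by linarith)
    have hlogt : Real.log t = -(ε/2) := Real.log_exp _
    set D : V → ℝ := fun v => if q v = 0 then t else p v / (p v + q v) with hD
    have hDok : ∀ v, 0 < D v ∧ D v < 1 := by
      intro v
      rw [hD]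
      by_cases h : q v = 0
      · simp [h]; exact ⟨ht0, ht1⟩
      · have hq : 0 < q v := lt_of_le_of_ne (hq0 v) (Ne.symm h)
        simp only [h, if_false]
        constructor
        · exact div_pos (hp v) (by linarith [hp v])
        · rw [div_lt_one (by linarith [hp v])]; linarith [hp v]
    have hterm : ∀ v, (p v * Real.log (p v / (p v + q v)) + q v * Real.log (q v / (p v + q v)))
        + p v * Real.log t ≤ p v * Real.log (D v) + q v * Real.log (1 - D v) := by
      intro v
      by_cases h : q v = 0
      · have hDv : D v = t := by rw [hD]; simp [h]
        rw [hDv, h]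
        simp [div_self (hp v).ne']
      · have hq : 0 < q v := lt_of_le_of_ne (hq0 v) (Ne.symm h)
        have hpq : p v + q v ≠ 0 := ne_of_gt (by linarith [hp v])
        have hDv : D v = p v / (p v + q v) := by rw [hD]; simp [h]
        rw [hDv]
        have h1 : 1 - p v / (p v + q v) = q v / (p v + q v) := by
          field_simp; ring
        rw [h1]
        have : p v * Real.log t ≤ 0 := by
          rw [hlogt]; nlinarith [(hp v).le]
        linarith
    have hsum : G q + Real.log t ≤ ∑ v, (p v * Real.log (D v) + q v * Real.log (1 - D v)) := by
      calc G q + Real.log t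
          = ∑ v, ((p v * Real.log (p v / (p v + q v)) + q v * Real.log (q v / (p v + q v)))
              + p v * Real.log t) := by
            rw [Finset.sum_add_distrib, ← Finset.sum_mul, hps, one_mul]
        _ ≤ _ := Finset.sum_le_sum fun v _ => hterm v
    have hmem : (∑ v, (p v * Real.log (D v) + q v * Real.log (1 - D v))) ∈ S q :=
      ⟨D, hDok, rfl⟩
    have : G q + Real.log t ≤ F q := by
      rw [hF]
      exact hsum.trans (le_csSup (hbdd q hq0) hmem)
    rw [hlogt] at this
    have : -Real.log 4 + ε/2 ≤ F q := by rw [hε] at this ⊢; linarith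
    linarith
  constructor
  · refine le_antisymm ?_ ?_
    · refine csInf_le ⟨-Real.log 4, ?_⟩ ⟨p, fun v => (hp v).le, hps, hFp.symm⟩
      rintro y ⟨q, hq0, hqs, rfl⟩
      exact hFge q hq0 hqs
    · refine le_csInf ⟨F p, p, fun v => (hp v).le, hps, rfl⟩ ?_
      rintro y ⟨q, hq0, hqs, rfl⟩
      exact hFge q hq0 hqs
  · intro q hq0 hqs
    constructor
    · intro hFq
      by_contra hne
      have := hFgt q hq0 hqs hne
      linarith [hFq ▸ this]
    · rintro rfl
      exact hFp
end
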